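/- arXiv:2307.06274 — 2 statements merged into one kernel-verified Lean document; each statement's English description precedes it below -/
import Mathlib

section
/- For s ∈ (0,1/2) and X → ∞, W_s(X) = (√π/(Γ(1/2-s)Γ(s))) ∫_{X²-1}^∞ u^{s-1}/√(u+1) du satisfies W_s(X) = 𝔟_s X^{2s-1} + O(X^{2s-3}), where 𝔟_s = Γ(1/2)/(Γ(3/2-s)Γ(s)). -/
open Real MeasureTheory

/-- `W_s(X)`, the hitting probability of `(-1,1)` for a `2s`-stable Lévy flight from `X`. -/
noncomputable def Wfun (s X : ℝ) : ℝ :=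
  (Real.sqrt π / (Real.Gamma (1/2 - s) * Real.Gamma s)) *
    ∫ u in Set.Ioi (X ^ 2 - 1), u ^ (s - 1) / Real.sqrt (u + 1)

/-!
Put `Y = X² - 1`. Convexity of `x ↦ x ^ p` for `p ≤ 0` (a mean value estimate) is used twice.
With `p = -1/2` it gives `0 ≤ u^(-1/2) - (u+1)^(-1/2) ≤ u^(-3/2)/2`, so the integral differs from
`∫_Y^∞ u^(s-3/2) du = Y^(s-1/2)/(1/2-s)` by at most `Y^(s-3/2)/2`. With `p = s - 1/2` it shows
that replacing `Y^(s-1/2)` by `(Y+1)^(s-1/2) = X^(2s-1)` costs at most `(1/2-s) Y^(s-3/2)`.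
Since `Γ(3/2-s) = (1/2-s) Γ(1/2-s)` and `Γ(1/2) = √π`, the prefactor of `W_s` divided by `1/2-s`
is `𝔟_s`, and `Y ≥ X²/2` turns `Y^(s-3/2)` into `2^(3/2-s) X^(2s-3)`.
-/

open Set

namespace Real

lemma rpow_sub_rpow_le_of_nonpos {p a b : ℝ} (hp : p ≤ 0) (ha : 0 < a) (hab : a ≤ b) :
    a ^ p - b ^ p ≤ -p * a ^ (p - 1) * (b - a) := by
  rcases hab.eq_or_lt with rfl | hlt
  · simp
  have hderiv : ∀ x ∈ Ioo a b, HasDerivAt (· ^ p) (p * x ^ (p - 1)) x := fun x hx =>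
    hasDerivAt_rpow_const (Or.inl (ha.trans hx.1).ne')
  have hcont : ContinuousOn (· ^ p) (Icc a b) := fun x hx =>
    (continuousAt_rpow_const x p (Or.inl (ha.trans_le hx.1).ne')).continuousWithinAt
  obtain ⟨c, hc, hslope⟩ := exists_hasDerivAt_eq_slope _ _ hlt hcont hderiv
  have hca : c ^ (p - 1) ≤ a ^ (p - 1) := rpow_le_rpow_of_nonpos ha hc.1.le (by linarith)
  rw [eq_div_iff (sub_pos.2 hlt).ne'] at hslope
  nlinarith [mul_le_mul_of_nonneg_left hca (mul_nonneg (neg_nonneg.2 hp) (sub_nonneg.2 hab))]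

end Real

lemma rpow_sub_rpow_div_sqrt_add_one_mem_Icc {t u : ℝ} (hu : 0 < u) :
    u ^ (t - 3/2) - u ^ (t - 1) / √(u + 1) ∈ Icc 0 (u ^ (t - 5/2) / 2) := by
  have hsqrt : 1 / √(u + 1) = (u + 1) ^ (-(1/2) : ℝ) := by
    rw [sqrt_eq_rpow, rpow_neg (by linarith), one_div]
  have hdiff : u ^ (t - 3/2) - u ^ (t - 1) / √(u + 1)
      = u ^ (t - 1) * (u ^ (-(1/2) : ℝ) - (u + 1) ^ (-(1/2) : ℝ)) := by
    rw [← hsqrt, show t - 3/2 = (t - 1) + -(1/2) by ring, rpow_add hu]; ring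
  have hbound : u ^ (t - 5/2) / 2
      = u ^ (t - 1) * (-(-(1/2)) * u ^ (-(1/2) - 1 : ℝ) * (u + 1 - u)) := by
    rw [show t - 5/2 = (t - 1) + (-(1/2) - 1) by ring, rpow_add hu]; ring
  have hpos : 0 ≤ u ^ (t - 1) := rpow_nonneg hu.le _
  rw [hdiff, hbound]
  exact ⟨mul_nonneg hpos (sub_nonneg.2 (rpow_le_rpow_of_nonpos hu (by linarith) (by norm_num))),
    mul_le_mul_of_nonneg_left (rpow_sub_rpow_le_of_nonpos (by norm_num) hu (by linarith)) hpos⟩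

lemma integral_Ioi_rpow_div_sqrt_add_one_mem_Icc {t Y : ℝ} (ht : t < 1/2) (hY : 0 < Y) :
    Y ^ (t - 1/2) / (1/2 - t) - ∫ u in Ioi Y, u ^ (t - 1) / √(u + 1)
      ∈ Icc 0 (Y ^ (t - 3/2) / 2) := by
  have hmem : ∀ u ∈ Ioi Y,
      u ^ (t - 3/2) - u ^ (t - 1) / √(u + 1) ∈ Icc 0 (u ^ (t - 5/2) / 2) := fun u hu =>
    rpow_sub_rpow_div_sqrt_add_one_mem_Icc (hY.trans hu)
  have hmain : IntegrableOn (fun u : ℝ => u ^ (t - 3/2)) (Ioi Y) :=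
    integrableOn_Ioi_rpow_of_lt (by linarith) hY
  have herr : IntegrableOn (fun u : ℝ => u ^ (t - 5/2) / 2) (Ioi Y) :=
    (integrableOn_Ioi_rpow_of_lt (by linarith) hY).div_const 2
  have hf : IntegrableOn (fun u : ℝ => u ^ (t - 1) / √(u + 1)) (Ioi Y) := by
    refine hmain.mono' (by fun_prop : Measurable _).aestronglyMeasurable
       ((ae_restrict_iff' measurableSet_Ioi).2 (ae_of_all _ ?_))
    intro u hu
    rw [norm_of_nonneg (div_nonneg (rpow_nonneg (hY.trans hu).le _) (sqrt_nonneg _))]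
    linarith [(hmem u hu).1]
  have hint_main : ∫ u in Ioi Y, u ^ (t - 3/2) = Y ^ (t - 1/2) / (1/2 - t) := by
    rw [integral_Ioi_rpow_of_lt (by linarith) hY, show t - 3/2 + 1 = t - 1/2 by ring,
      show 1/2 - t = -(t - 1/2) by ring, div_neg, neg_div]
  have hint_err : ∫ u in Ioi Y, u ^ (t - 5/2) / 2 ≤ Y ^ (t - 3/2) / 2 := by
    rw [integral_div, integral_Ioi_rpow_of_lt (by linarith) hY, show t - 5/2 + 1 = t - 3/2 by ring,
      neg_div, ← div_neg, neg_sub]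
    gcongr
    exact div_le_self (rpow_nonneg hY.le _) (by linarith)
  rw [← hint_main, ← integral_sub hmain hf]
  exact ⟨setIntegral_nonneg measurableSet_Ioi fun u hu => (hmem u hu).1,
    (setIntegral_mono_on (hmain.sub hf) herr measurableSet_Ioi fun u hu => (hmem u hu).2).trans
      hint_err⟩

lemma abs_integral_Ioi_rpow_div_sqrt_add_one_sub_le {t Y : ℝ} (ht : t < 1/2) (hY : 0 < Y) :
    |(∫ u in Ioi Y, u ^ (t - 1) / √(u + 1)) - (Y + 1) ^ (t - 1/2) / (1/2 - t)|
      ≤ Y ^ (t - 3/2) := by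
  obtain ⟨hI₀, hI₁⟩ := integral_Ioi_rpow_div_sqrt_add_one_mem_Icc ht hY
  have hht : 0 < 1/2 - t := by linarith
  have hshift₀ : 0 ≤ Y ^ (t - 1/2) - (Y + 1) ^ (t - 1/2) :=
    sub_nonneg.2 (rpow_le_rpow_of_nonpos hY (by linarith) (by linarith))
  have hshift₁ : Y ^ (t - 1/2) - (Y + 1) ^ (t - 1/2) ≤ (1/2 - t) * Y ^ (t - 3/2) := by
    have := rpow_sub_rpow_le_of_nonpos (by linarith : t - 1/2 ≤ 0) hY (by linarith : Y ≤ Y + 1)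
    rwa [show t - 1/2 - 1 = t - 3/2 by ring, add_sub_cancel_left, mul_one, neg_sub] at this
  have hq₀ : 0 ≤ (Y ^ (t - 1/2) - (Y + 1) ^ (t - 1/2)) / (1/2 - t) := div_nonneg hshift₀ hht.le
  have hq₁ : (Y ^ (t - 1/2) - (Y + 1) ^ (t - 1/2)) / (1/2 - t) ≤ Y ^ (t - 3/2) := by
    rwa [div_le_iff₀' hht]
  rw [sub_div] at hq₀ hq₁
  rw [abs_le]
  constructor <;> linarith

lemma abs_integral_Ioi_sq_sub_one_sub_le {t X : ℝ} (ht : t < 1/2) (hX : 2 ≤ X) :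
    |(∫ u in Ioi (X ^ 2 - 1), u ^ (t - 1) / √(u + 1)) - X ^ (2 * t - 1) / (1/2 - t)|
      ≤ 2 ^ (3/2 - t) * X ^ (2 * t - 3) := by
  have hX₀ : 0 ≤ X := by linarith
  have hsq : ∀ z : ℝ, (X ^ 2) ^ z = X ^ (2 * z) := fun z => by
    rw [← rpow_natCast_mul hX₀]; norm_num
  have hY : X ^ 2 / 2 ≤ X ^ 2 - 1 := by nlinarith
  have hY₀ : 0 < X ^ 2 / 2 := by positivity
  calc _ = |(∫ u in Ioi (X ^ 2 - 1), u ^ (t - 1) / √(u + 1))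
          - (X ^ 2 - 1 + 1) ^ (t - 1/2) / (1/2 - t)| := by
        rw [sub_add_cancel, hsq]; ring_nf
    _ ≤ (X ^ 2 - 1) ^ (t - 3/2) :=
        abs_integral_Ioi_rpow_div_sqrt_add_one_sub_le ht (hY₀.trans_le hY)
    _ ≤ (X ^ 2 / 2) ^ (t - 3/2) := rpow_le_rpow_of_nonpos hY₀ hY (by linarith)
    _ = 2 ^ (3/2 - t) * X ^ (2 * t - 3) := by
        rw [div_rpow (by positivity) zero_le_two, hsq, div_eq_mul_inv, ← rpow_neg zero_le_two]
        ring_nf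

theorem stmt_8 (s : ℝ) (hs : s ∈ Set.Ioo (0:ℝ) (1/2)) :
    ∃ C M : ℝ, 0 < C ∧ 0 < M ∧ ∀ X : ℝ, M ≤ X →
      |Wfun s X - (Real.Gamma (1/2) / (Real.Gamma (3/2 - s) * Real.Gamma s))
          * X ^ (2*s - 1)|
        ≤ C * X ^ (2*s - 3) := by
  obtain ⟨hs₀, hs₁⟩ := hs
  set κ := √π / (Gamma (1/2 - s) * Gamma s) with hκ
  have hκ₀ : 0 < κ := by
    have := Gamma_pos_of_pos hs₀
    have := Gamma_pos_of_pos (by linarith : 0 < 1/2 - s)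
    positivity
  have hb : Gamma (1/2) / (Gamma (3/2 - s) * Gamma s) = κ / (1/2 - s) := by
    rw [show (3:ℝ)/2 - s = (1/2 - s) + 1 by ring, Gamma_add_one (by linarith), Gamma_one_half_eq,
      hκ, div_div, mul_assoc, mul_comm (1/2 - s)]
  refine ⟨κ * 2 ^ (3/2 - s), 2, by positivity, two_pos, fun X hX => ?_⟩
  have hsplit : Wfun s X - κ / (1/2 - s) * X ^ (2 * s - 1) = κ *
      ((∫ u in Ioi (X ^ 2 - 1), u ^ (s - 1) / √(u + 1)) - X ^ (2 * s - 1) / (1/2 - s)) := by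
    rw [Wfun]; ring
  rw [hb, hsplit, abs_mul, abs_of_pos hκ₀, mul_assoc]
  exact mul_le_mul_of_nonneg_left (abs_integral_Ioi_sq_sub_one_sub_le hs₁ hX) hκ₀.le
end

section
/- For s ∈ (0,1/2), the fractional Poisson kernel P_s(y,x) = (sin(πs)/π) ((1-x²)/(y²-1))^s / |x-y| satisfies ∫_{|y|>1} P_s(y,x) dy = 1 for every x ∈ (-1,1). -/
/-!
Pairing `y` with `-y`, the kernel on `y > 1` becomes
`(sin (π s) / π) ((1 - x²) / (y² - 1)) ^ s · 2y / (y² - x²)`. The substitution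
`t = (1 - x²) / (y² - x²)`, a decreasing bijection of `(1, ∞)` onto `(0, 1)`, turns this into
the Beta density `t ^ (s - 1) (1 - t) ^ (-s)`, and `B(s, 1 - s) = Γ(s) Γ(1 - s) = π / sin (π s)`.
-/

open Real MeasureTheory Set

section Beta

variable {a b : ℝ}

lemma ofReal_cpow_mul_one_sub_cpow {t : ℝ} (ht : t ∈ Ioo (0:ℝ) 1) :
    (t : ℂ) ^ ((a : ℂ) - 1) * (1 - (t : ℂ)) ^ ((b : ℂ) - 1)
      = ((t ^ (a - 1) * (1 - t) ^ (b - 1) : ℝ) : ℂ) := by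
  rw [Complex.ofReal_mul, Complex.ofReal_cpow ht.1.le, Complex.ofReal_cpow (sub_nonneg.2 ht.2.le)]
  push_cast
  rfl

lemma integrableOn_rpow_mul_one_sub_rpow (ha : 0 < a) (hb : 0 < b) :
    IntegrableOn (fun t : ℝ => t ^ (a - 1) * (1 - t) ^ (b - 1)) (Ioo 0 1) := by
  have h : IntegrableOn
      (fun t : ℝ => ((t : ℂ) ^ ((a : ℂ) - 1) * (1 - (t : ℂ)) ^ ((b : ℂ) - 1)).re)
      (Ioc 0 1) :=
    (Complex.betaIntegral_convergent (u := a) (v := b) (by simpa) (by simpa)).1.re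
  refine (h.mono_set Ioo_subset_Ioc_self).congr ?_
  filter_upwards [ae_restrict_mem measurableSet_Ioo] with t ht
  simp only [ofReal_cpow_mul_one_sub_cpow ht, Complex.ofReal_re]

lemma integral_rpow_mul_one_sub_rpow (ha : 0 < a) (hb : 0 < b) :
    ∫ t in Ioo (0:ℝ) 1, t ^ (a - 1) * (1 - t) ^ (b - 1) = ProbabilityTheory.beta a b := by
  rw [ProbabilityTheory.beta_eq_betaIntegralReal a b ha hb, Complex.betaIntegral,
    intervalIntegral.integral_of_le zero_le_one, integral_Ioc_eq_integral_Ioo,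
    setIntegral_congr_fun measurableSet_Ioo (fun t ht => ofReal_cpow_mul_one_sub_cpow ht),
    integral_complex_ofReal, Complex.ofReal_re]

lemma beta_one_sub (s : ℝ) : ProbabilityTheory.beta s (1 - s) = π / sin (π * s) := by
  rw [ProbabilityTheory.beta, add_sub_cancel, Real.Gamma_one, div_one,
    Real.Gamma_mul_Gamma_one_sub]

lemma rpow_sub_one_mul_one_sub_rpow {t : ℝ} (ht : t ∈ Ioo (0:ℝ) 1) (s : ℝ) :
    t ^ (s - 1) * (1 - t) ^ ((1 - s) - 1) = (t / (1 - t)) ^ s / t := by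
  have h1t : 0 < 1 - t := sub_pos.2 ht.2
  rw [sub_sub_cancel_left, rpow_neg h1t.le, rpow_sub_one ht.1.ne', div_rpow ht.1.le h1t.le]
  ring

end Beta

section Substitution

variable {c : ℝ}

lemma hasDerivWithinAt_one_sub_div_sq_sub (hc : c < 1) {y : ℝ} (hy : y ∈ Ioi 1) :
    HasDerivWithinAt (fun y : ℝ => (1 - c) / (y ^ 2 - c))
      (-(1 - c) * (2 * y) / (y ^ 2 - c) ^ 2) (Ioi 1) y := by
  have hyc : y ^ 2 - c ≠ 0 := by nlinarith [mem_Ioi.1 hy]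
  refine (((hasDerivAt_const y (1 - c)).fun_div ((hasDerivAt_pow 2 y).sub_const c)
    hyc).congr_deriv ?_).hasDerivWithinAt
  norm_num
  ring

lemma strictAntiOn_one_sub_div_sq_sub (hc : c < 1) :
    StrictAntiOn (fun y : ℝ => (1 - c) / (y ^ 2 - c)) (Ioi 1) := by
  intro y₁ hy₁ y₂ _ h
  have hy₁ : (1 : ℝ) < y₁ := hy₁
  exact div_lt_div_of_pos_left (by linarith) (by nlinarith) (by nlinarith)

lemma image_one_sub_div_sq_sub_Ioi (hc : c < 1) :
    (fun y : ℝ => (1 - c) / (y ^ 2 - c)) '' Ioi 1 = Ioo 0 1 := by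
  ext t
  constructor
  · rintro ⟨y, hy, rfl⟩
    have hy : (1 : ℝ) < y := hy
    exact ⟨div_pos (by linarith) (by nlinarith), (div_lt_one (by nlinarith)).2 (by nlinarith)⟩
  · rintro ⟨ht0, ht1⟩
    have hlt : 1 - c < (1 - c) / t := (lt_div_iff₀ ht0).2 (by nlinarith)
    have hsq : √(c + (1 - c) / t) ^ 2 = c + (1 - c) / t := sq_sqrt (by linarith)
    refine ⟨√(c + (1 - c) / t), (lt_sqrt zero_le_one).2 (by linarith), ?_⟩
    have hc' : 1 - c ≠ 0 := by linarith
    simp only [hsq, add_sub_cancel_left]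
    field_simp

end Substitution

/-- With `c = x ^ 2` and `y > 1`, `sin (π * s) / π * symmetrizedPoissonKernel s c y` is
`P_s(y, x) + P_s(-y, x)`. -/
noncomputable def symmetrizedPoissonKernel (s c y : ℝ) : ℝ :=
  ((1 - c) / (y ^ 2 - 1)) ^ s * (2 * y / (y ^ 2 - c))

section SymmetrizedPoissonKernel

variable {s c : ℝ}

lemma symmetrizedPoissonKernel_eq_abs_deriv_smul (hc : c < 1) {y : ℝ} (hy : y ∈ Ioi 1) :
    symmetrizedPoissonKernel s c y = |-(1 - c) * (2 * y) / (y ^ 2 - c) ^ 2| •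
      (((1 - c) / (y ^ 2 - c)) ^ (s - 1) * (1 - (1 - c) / (y ^ 2 - c)) ^ ((1 - s) - 1)) := by
  have hy : (1 : ℝ) < y := hy
  have hyc : 0 < y ^ 2 - c := by nlinarith
  have hc' : 1 - c ≠ 0 := by linarith
  have hτ := (image_one_sub_div_sq_sub_Ioi hc).subset (mem_image_of_mem _ hy)
  have hratio : (1 - c) / (y ^ 2 - c) / (1 - (1 - c) / (y ^ 2 - c)) = (1 - c) / (y ^ 2 - 1) := by
    rw [one_sub_div hyc.ne', sub_sub_sub_cancel_right, div_div_div_cancel_right₀ hyc.ne']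
  rw [smul_eq_mul, rpow_sub_one_mul_one_sub_rpow hτ, hratio, symmetrizedPoissonKernel,
    abs_of_nonpos (div_nonpos_of_nonpos_of_nonneg (by nlinarith) (by positivity))]
  field_simp

lemma integrableOn_symmetrizedPoissonKernel (hs0 : 0 < s) (hs1 : s < 1) (hc : c < 1) :
    IntegrableOn (symmetrizedPoissonKernel s c) (Ioi 1) := by
  have h := integrableOn_rpow_mul_one_sub_rpow hs0 (sub_pos.2 hs1)
  rw [← image_one_sub_div_sq_sub_Ioi hc, integrableOn_image_iff_integrableOn_abs_deriv_smul
    measurableSet_Ioi (fun _ hy => hasDerivWithinAt_one_sub_div_sq_sub hc hy)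
    (strictAntiOn_one_sub_div_sq_sub hc).injOn] at h
  exact h.congr_fun (fun y hy => (symmetrizedPoissonKernel_eq_abs_deriv_smul hc hy).symm)
    measurableSet_Ioi

lemma integral_symmetrizedPoissonKernel (hs0 : 0 < s) (hs1 : s < 1) (hc : c < 1) :
    ∫ y in Ioi 1, symmetrizedPoissonKernel s c y = π / sin (π * s) := by
  rw [← beta_one_sub, ← integral_rpow_mul_one_sub_rpow hs0 (sub_pos.2 hs1),
    ← image_one_sub_div_sq_sub_Ioi hc, integral_image_eq_integral_abs_deriv_smul
    measurableSet_Ioi (fun _ hy => hasDerivWithinAt_one_sub_div_sq_sub hc hy)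
    (strictAntiOn_one_sub_div_sq_sub hc).injOn]
  exact setIntegral_congr_fun measurableSet_Ioi
    (fun y hy => symmetrizedPoissonKernel_eq_abs_deriv_smul hc hy)

end SymmetrizedPoissonKernel

lemma setIntegral_lt_abs_eq_integral_Ioi_add_comp_neg {E : Type*} [NormedAddCommGroup E]
    [NormedSpace ℝ E] {f : ℝ → E} {a : ℝ} (ha : 0 ≤ a) (hf : IntegrableOn f (Ioi a))
    (hf_neg : IntegrableOn (fun y => f (-y)) (Ioi a)) :
    ∫ y in {y | a < |y|}, f y = ∫ y in Ioi a, (f y + f (-y)) := by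
  have hset : {y : ℝ | a < |y|} = Iio (-a) ∪ Ioi a := by
    ext y
    simp only [mem_ofPred_eq, mem_union, mem_Iio, mem_Ioi, lt_abs, lt_neg]
    tauto
  have hf_Iio : IntegrableOn f (Iio (-a)) := by
    rw [← neg_neg a] at hf_neg
    simpa using hf_neg.comp_neg_Iio
  rw [hset, setIntegral_union ((Iic_disjoint_Ioi (by linarith)).mono_left Iio_subset_Iic_self)
    measurableSet_Ioi hf_Iio hf,
    integral_add hf hf_neg, ← integral_Iic_eq_integral_Iio, ← integral_comp_neg_Ioi, add_comm]

lemma IntegrableOn.of_add_of_nonneg {α : Type*} [MeasurableSpace α] {μ : Measure α}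
    {f g : α → ℝ} {s : Set α} (hs : MeasurableSet s)
    (hfg : IntegrableOn (fun y => f y + g y) s μ) (hf : AEStronglyMeasurable f (μ.restrict s))
    (hf0 : ∀ y ∈ s, 0 ≤ f y) (hg0 : ∀ y ∈ s, 0 ≤ g y) : IntegrableOn f s μ := by
  refine hfg.mono' hf ?_
  filter_upwards [ae_restrict_mem hs] with y hy
  rw [Real.norm_of_nonneg (hf0 y hy)]
  linarith [hg0 y hy]

lemma poissonKernel_add_comp_neg {s x y : ℝ} (hx : x ∈ Ioo (-1) 1) (hy : 1 < y) :
    ((1 - x ^ 2) / (y ^ 2 - 1)) ^ s / |x - y| + ((1 - x ^ 2) / ((-y) ^ 2 - 1)) ^ s / |x - -y|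
      = symmetrizedPoissonKernel s (x ^ 2) y := by
  obtain ⟨hx1, hx2⟩ := hx
  rw [neg_sq, sub_neg_eq_add, abs_of_neg (by linarith : x - y < 0), neg_sub,
    abs_of_pos (by linarith : 0 < x + y), symmetrizedPoissonKernel]
  have : y - x ≠ 0 := by linarith
  have : x + y ≠ 0 := by linarith
  have : y ^ 2 - x ^ 2 ≠ 0 := by nlinarith
  generalize ((1 - x ^ 2) / (y ^ 2 - 1)) ^ s = P
  field_simp
  ring

theorem stmt_16 (s : ℝ) (hs : s ∈ Set.Ioo (0:ℝ) (1/2)) (x : ℝ)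
    (hx : x ∈ Set.Ioo (-1:ℝ) 1) :
    ∫ y in {y : ℝ | 1 < |y|},
        (Real.sin (π * s) / π) * ((1 - x^2) / (y^2 - 1)) ^ s / |x - y| = 1 := by
  obtain ⟨hs0, hs12⟩ := hs
  have hs1 : s < 1 := by linarith
  have hx2 : x ^ 2 < 1 := by nlinarith [hx.1, hx.2]
  set k : ℝ → ℝ := fun y => ((1 - x ^ 2) / (y ^ 2 - 1)) ^ s / |x - y| with hk
  have hsum : ∀ y ∈ Ioi (1 : ℝ), k y + k (-y) = symmetrizedPoissonKernel s (x ^ 2) y :=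
    fun y hy => poissonKernel_add_comp_neg hx hy
  have hint : IntegrableOn (fun y => k y + k (-y)) (Ioi 1) :=
    (integrableOn_symmetrizedPoissonKernel hs0 hs1 hx2).congr_fun
      (fun y hy => (hsum y hy).symm) measurableSet_Ioi
  have hk_meas : Measurable k := by simp only [hk]; fun_prop
  have hk_nonneg : ∀ y ∈ Ioi (1 : ℝ), 0 ≤ k y ∧ 0 ≤ k (-y) := fun y (hy : 1 < y) => by
    have hbase : 0 ≤ (1 - x ^ 2) / (y ^ 2 - 1) := div_nonneg (by linarith) (by nlinarith)
    simp only [hk, neg_sq]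
    exact ⟨by positivity, by positivity⟩
  have hk_int : IntegrableOn k (Ioi 1) :=
    IntegrableOn.of_add_of_nonneg measurableSet_Ioi hint hk_meas.aestronglyMeasurable
      (fun y hy => (hk_nonneg y hy).1) (fun y hy => (hk_nonneg y hy).2)
  have hk_neg_int : IntegrableOn (fun y => k (-y)) (Ioi 1) :=
    IntegrableOn.of_add_of_nonneg measurableSet_Ioi (by simpa only [add_comm] using hint)
      (hk_meas.comp measurable_neg).aestronglyMeasurable
      (fun y hy => (hk_nonneg y hy).2) (fun y hy => (hk_nonneg y hy).1)
  have hsin : 0 < sin (π * s) := sin_pos_of_pos_of_lt_pi (by positivity) (by nlinarith [pi_pos])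
  simp_rw [mul_div_assoc]
  rw [integral_const_mul, setIntegral_lt_abs_eq_integral_Ioi_add_comp_neg zero_le_one hk_int
    hk_neg_int, setIntegral_congr_fun measurableSet_Ioi hsum,
    integral_symmetrizedPoissonKernel hs0 hs1 hx2]
  field_simp
end
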